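/- Let F be a finite connected core relational structure with a minimal cut C of size n > 1 such that F \ C has two connected components giving pieces P₁ and P₂ with root tuple C. Let H be the disjoint union of P₁ and P₂ rooted at the 2n-tuple interleaving the two copies of the cut vertices, let S be a structure from the coloring lemma, and let D = S * (H, →R). Then the map f: D → F sending each vertex (→v, (a, t)) to a ∈ F is a homomorphism, and there is no homomorphism F → D; i.e. D ∈ Forb_h({F}). -/

import Mathlib

/-- A relational structure of type given by arities `ar : I → ℕ`. -/
structure RelStruct (I : Type) (ar : I → ℕ) : Type 1 where
  V : Type
  rel : ∀ i, Set (Fin (ar i) → V)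

namespace RelStruct

variable {I : Type} {ar : I → ℕ}

/-- `f` is a homomorphism from `A` to `B`. -/
def IsHom (A B : RelStruct I ar) (f : A.V → B.V) : Prop :=
  ∀ i, ∀ t ∈ A.rel i, (f ∘ t) ∈ B.rel i

/-- `f` is an embedding (injective homomorphism). -/
def IsEmbedding (A B : RelStruct I ar) (f : A.V → B.V) : Prop :=
  Function.Injective f ∧ IsHom A B f

/-- `f` is a strong (induced-substructure) embedding. -/
def IsStrongEmb (A B : RelStruct I ar) (f : A.V → B.V) : Prop :=
  Function.Injective f ∧ ∀ i (t : Fin (ar i) → A.V), t ∈ A.rel i ↔ (f ∘ t) ∈ B.rel i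

/-- Isomorphism of relational structures. -/
def Iso (A B : RelStruct I ar) : Prop :=
  ∃ e : A.V ≃ B.V, ∀ i (t : Fin (ar i) → A.V), t ∈ A.rel i ↔ (⇑e ∘ t) ∈ B.rel i

/-- The Gaifman graph of a relational structure. -/
def gaifman (A : RelStruct I ar) : SimpleGraph A.V where
  Adj x y := x ≠ y ∧ ∃ i, ∃ t ∈ A.rel i, x ∈ Set.range t ∧ y ∈ Set.range t
  symm := by
    constructor
    rintro x y ⟨hxy, i, t, ht, hx, hy⟩
    exact ⟨hxy.symm, i, t, ht, hy, hx⟩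
  loopless := by
    constructor
    rintro x ⟨h, -⟩
    exact h rfl

/-- The substructure induced on a set of vertices. -/
def induce (A : RelStruct I ar) (S : Set A.V) : RelStruct I ar where
  V := S
  rel i := {t | (fun k => (t k : A.V)) ∈ A.rel i}

/-- `C` is a cut: removing it disconnects the Gaifman graph. -/
def IsCut (A : RelStruct I ar) (C : Set A.V) : Prop :=
  ¬ (A.induce Cᶜ).gaifman.Preconnected

/-- `C` is an inclusion-minimal cut. -/
def IsMinCut (A : RelStruct I ar) (C : Set A.V) : Prop :=
  A.IsCut C ∧ ∀ C' ⊂ C, ¬ A.IsCut C'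

/-- `(R, K)` determines a piece of `A`: `R` is a minimal cut and `K` is the vertex set of a
connected component of the Gaifman graph of `A` with `R` removed. -/
def IsPiece (A : RelStruct I ar) (R K : Set A.V) : Prop :=
  A.IsMinCut R ∧ ∃ v : (A.induce Rᶜ).V,
    K = Subtype.val '' {w | (A.induce Rᶜ).gaifman.Reachable v w}

/-- A structure is irreducible if any two distinct vertices lie in a common tuple. -/
def Irreducible (A : RelStruct I ar) : Prop :=
  ∀ x y : A.V, x ≠ y → ∃ i, ∃ t ∈ A.rel i, x ∈ Set.range t ∧ y ∈ Set.range t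

/-- `A` omits homomorphisms from all members of `F`. -/
def ForbH (F : Set (RelStruct I ar)) (A : RelStruct I ar) : Prop :=
  ∀ F₀ ∈ F, ∀ f : F₀.V → A.V, ¬ IsHom F₀ A f

/-- `A` omits embeddings from all members of `F`. -/
def ForbE (F : Set (RelStruct I ar)) (A : RelStruct I ar) : Prop :=
  ∀ F₀ ∈ F, ∀ f : F₀.V → A.V, ¬ IsEmbedding F₀ A f

end RelStruct
namespace RelStruct

variable {I : Type} {ar : I → ℕ} {I' : Type} {m : I' → ℕ}

/-- The canonical lift `L(A)`: for each piece `(P j, r j)` a new `m j`-ary relation recording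
root images of homomorphisms of the piece into `A`. -/
def canonicalLift (P : I' → RelStruct I ar) (r : ∀ j, Fin (m j) → (P j).V)
    (A : RelStruct I ar) : RelStruct (I ⊕ I') (Sum.elim ar m) where
  V := A.V
  rel := fun i => match i with
    | Sum.inl i => A.rel i
    | Sum.inr j => {t | ∃ f : (P j).V → A.V, IsHom (P j) A f ∧ f ∘ r j = t}

/-- Isomorphism of rooted structures. -/
def RootedIso {n : ℕ} (Q Q' : RelStruct I ar) (ρ : Fin n → Q.V) (ρ' : Fin n → Q'.V) : Prop :=
  ∃ e : Q.V ≃ Q'.V, (∀ i (t : Fin (ar i) → Q.V), t ∈ Q.rel i ↔ (⇑e ∘ t) ∈ Q'.rel i) ∧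
    ∀ k, e (ρ k) = ρ' k

/-- `(Q, ρ)` is (a copy of) a piece of `A`, rooted at an enumeration of the minimal cut. -/
def IsRootedPiece (A : RelStruct I ar) {n : ℕ} (Q : RelStruct I ar) (ρ : Fin n → Q.V) : Prop :=
  ∃ R K : Set A.V, A.IsPiece R K ∧ ∃ e : Q.V ≃ (A.induce (R ∪ K)).V,
    (∀ i (t : Fin (ar i) → Q.V), t ∈ Q.rel i ↔ (⇑e ∘ t) ∈ (A.induce (R ∪ K)).rel i) ∧
    Function.Injective ρ ∧ Set.range (fun k => ((e (ρ k)).1 : A.V)) = R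

/-- Membership in the class `L` of induced substructures of canonical lifts of members
of `Forb_h(F)`. -/
def InL (F : Set (RelStruct I ar)) (P : I' → RelStruct I ar) (r : ∀ j, Fin (m j) → (P j).V)
    (X : RelStruct (I ⊕ I') (Sum.elim ar m)) : Prop :=
  ∃ A : RelStruct I ar, ForbH F A ∧ ∃ S : Set A.V,
    Iso X ((canonicalLift P r A).induce S)

/-- Disjoint union of two structures. -/
def disjUnion (A B : RelStruct I ar) : RelStruct I ar where
  V := A.V ⊕ B.V
  rel i := {t | (∃ t₁ ∈ A.rel i, t = Sum.inl ∘ t₁) ∨ (∃ t₂ ∈ B.rel i, t = Sum.inr ∘ t₂)}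

/-- The identifications of the indicator construction. -/
def indRel {S : Type} {n : ℕ} (Rs : Set (Fin n → S)) (A : RelStruct I ar)
    (ρ : Fin n → A.V) : ↥Rs × A.V → ↥Rs × A.V → Prop := fun p q =>
  ∃ i j : Fin n, p.2 = ρ i ∧ q.2 = ρ j ∧ (p.1 : Fin n → S) i = (q.1 : Fin n → S) j

/-- The indicator construction `S * (A, ρ)`: each tuple of `Rs` is replaced by a copy of `A`
with roots identified according to the tuple. -/
def indicator {S : Type} {n : ℕ} (Rs : Set (Fin n → S)) (A : RelStruct I ar)
    (ρ : Fin n → A.V) : RelStruct I ar where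
  V := Quot (indRel Rs A ρ)
  rel i := {t | ∃ (u : ↥Rs) (t' : Fin (ar i) → A.V), t' ∈ A.rel i ∧
    ∀ k, t k = Quot.mk (indRel Rs A ρ) (u, t' k)}

/-- The disjoint union of `|Rs|` copies of `A`. -/
def copies {S : Type} {n : ℕ} (Rs : Set (Fin n → S)) (A : RelStruct I ar) : RelStruct I ar where
  V := ↥Rs × A.V
  rel i := {t | (∃ u, ∀ k, (t k).1 = u) ∧ (fun k => (t k).2) ∈ A.rel i}

/-- A one-vertex structure over the countable type `ar : ℕ → ℕ`, with relation `i`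
inhabited iff `i ∈ s`. -/
def oneVertex (ar' : ℕ → ℕ) (s : Set ℕ) : RelStruct ℕ ar' where
  V := PUnit
  rel i := {_t | i ∈ s}

/-- The lift of `U` by countably many unary relations, the `j`-th holding exactly of the
vertex enumerated `j` by `g`. -/
def unaryLift (U : RelStruct I ar) (g : U.V → ℕ) :
    RelStruct (I ⊕ ℕ) (Sum.elim ar fun _ => 1) where
  V := U.V
  rel := fun i => match i with
    | Sum.inl i => U.rel i
    | Sum.inr j => {t | g (t ⟨0, Nat.one_pos⟩) = j}

/-- The age of `X`: the class of (finite) structures strongly embeddable into `X`. -/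
def AgeMem (X Y : RelStruct I ar) : Prop :=
  Finite Y.V ∧ ∃ f : Y.V → X.V, IsStrongEmb Y X f

end RelStruct


private lemma aux_reach_closed {V : Type*} {G : SimpleGraph V} {M : Set V}
    (h : ∀ a b, G.Adj a b → a ∈ M → b ∈ M) :
    ∀ {a b : V}, G.Reachable a b → a ∈ M → b ∈ M := by
  intro a b hr
  obtain ⟨p⟩ := hr
  induction p with
  | nil => exact fun ha => ha
  | cons hadj _ ih => exact fun ha => ih (h _ _ hadj ha)

open RelStruct in
/-- For a finite connected core `F` with a minimal cut `C` of size `> 1` giving two pieces,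
the indicator structure `D = S * (H, ρ)` (with `H` the disjoint union of the two pieces rooted
at two interleaved copies of the cut) maps homomorphically onto `F` by the natural projection,
but admits no homomorphism from `F`; i.e. `D ∈ Forb_h({F})`. -/
theorem indicator_omits_F {I : Type} {ar : I → ℕ}
    (F : RelStruct I ar) [Finite F.V] (hconn : F.gaifman.Connected)
    (hcore : ∀ g : F.V → F.V, IsHom F F g → Function.Surjective g)
    (C K₁ K₂ : Set F.V)
    (hP₁ : F.IsPiece C K₁) (hP₂ : F.IsPiece C K₂) (hne : K₁ ≠ K₂)
    (hcover : C ∪ K₁ ∪ K₂ = Set.univ)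
    (nC : ℕ) (hn : 1 < nC)
    (c : Fin nC → F.V) (hcinj : Function.Injective c)
    (hcr : ∀ x, c x ∈ C) (hcsurj : C ⊆ Set.range c)
    (S : Type) [Fintype S] (Rs : Set (Fin (2 * nC) → S)) (part : S → Fin nC) (k : ℕ)
    (h1 : ∀ t ∈ Rs, Function.Injective t ∧ ∀ j : Fin (2 * nC), (part (t j)).val = j.val / 2)
    (h2 : ∀ t ∈ Rs, ∀ t' ∈ Rs, t ≠ t' → Set.Subsingleton (Set.range t ∩ Set.range t'))
    (h3 : ∀ χ : S → Fin (2 ^ k), ∃ t ∈ Rs, ∀ i : Fin nC,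
      χ (t ⟨2 * i.val, by have := i.isLt; omega⟩) =
        χ (t ⟨2 * i.val + 1, by have := i.isLt; omega⟩))
    (h4 : ∀ v : S, ∃ t ∈ Rs, v ∈ Set.range t)
    (ρ : Fin (2 * nC) → (disjUnion (F.induce (C ∪ K₁)) (F.induce (C ∪ K₂))).V)
    (hρ₁ : ∀ x : Fin nC, ρ ⟨2 * x.val, by have := x.isLt; omega⟩ =
      Sum.inl ⟨c x, Set.mem_union_left _ (hcr x)⟩)
    (hρ₂ : ∀ x : Fin nC, ρ ⟨2 * x.val + 1, by have := x.isLt; omega⟩ =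
      Sum.inr ⟨c x, Set.mem_union_left _ (hcr x)⟩) :
    (∃ f : (indicator Rs (disjUnion (F.induce (C ∪ K₁)) (F.induce (C ∪ K₂))) ρ).V → F.V,
      (∀ (u : ↥Rs) (a : (disjUnion (F.induce (C ∪ K₁)) (F.induce (C ∪ K₂))).V),
        f (Quot.mk (indRel Rs (disjUnion (F.induce (C ∪ K₁)) (F.induce (C ∪ K₂))) ρ) (u, a)) =
          Sum.elim Subtype.val Subtype.val a) ∧
      IsHom (indicator Rs (disjUnion (F.induce (C ∪ K₁)) (F.induce (C ∪ K₂))) ρ) F f) ∧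
    ∀ g : F.V → (indicator Rs (disjUnion (F.induce (C ∪ K₁)) (F.induce (C ∪ K₂))) ρ).V,
      ¬ IsHom F (indicator Rs (disjUnion (F.induce (C ∪ K₁)) (F.induce (C ∪ K₂))) ρ) g := by
  classical
  obtain ⟨hmin₁, v₁', hK₁def⟩ := hP₁
  obtain ⟨hmin₂, v₂', hK₂def⟩ := hP₂
  have hK₁sub : ∀ v, v ∈ K₁ → v ∉ C := by
    rw [hK₁def]; rintro v ⟨z, hz, rfl⟩; exact z.2
  have hK₂sub : ∀ v, v ∈ K₂ → v ∉ C := by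
    rw [hK₂def]; rintro v ⟨z, hz, rfl⟩; exact z.2
  have hv₁K₁ : v₁'.1 ∈ K₁ := by
    rw [hK₁def]; exact ⟨v₁', SimpleGraph.Reachable.refl _, rfl⟩
  have hv₂K₂ : v₂'.1 ∈ K₂ := by
    rw [hK₂def]; exact ⟨v₂', SimpleGraph.Reachable.refl _, rfl⟩
  have hdisj : ∀ a, a ∈ K₁ → a ∈ K₂ → False := by
    intro a ha₁ ha₂
    rw [hK₁def] at ha₁; rw [hK₂def] at ha₂
    obtain ⟨z₁, hz₁, hza₁⟩ := ha₁
    obtain ⟨z₂, hz₂, hza₂⟩ := ha₂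
    have hz : z₂ = z₁ := Subtype.ext (hza₂.trans hza₁.symm)
    subst hz
    apply hne
    rw [hK₁def, hK₂def]
    have hset : {w | (F.induce Cᶜ).gaifman.Reachable v₁' w}
        = {w | (F.induce Cᶜ).gaifman.Reachable v₂' w} := by
      ext w
      constructor
      · intro hw; exact hz₂.trans (hz₁.symm.trans hw)
      · intro hw; exact hz₁.trans (hz₂.symm.trans hw)
    exact congrArg (Set.image Subtype.val) hset
  have hhalf : ∀ i : Fin (2 * nC), i.val / 2 < nC := fun i => by have := i.isLt; omega
  have hρeven : ∀ (x : ℕ) (hx : x < nC) (i : Fin (2 * nC)), i.val = 2 * x →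
      ρ i = Sum.inl ⟨c ⟨x, hx⟩, Set.mem_union_left _ (hcr _)⟩ := by
    intro x hx i hi
    have he : i = ⟨2 * (⟨x, hx⟩ : Fin nC).val, by have := (⟨x, hx⟩ : Fin nC).isLt; omega⟩ :=
      Fin.ext hi
    rw [he]
    exact hρ₁ ⟨x, hx⟩
  have hρodd : ∀ (x : ℕ) (hx : x < nC) (i : Fin (2 * nC)), i.val = 2 * x + 1 →
      ρ i = Sum.inr ⟨c ⟨x, hx⟩, Set.mem_union_left _ (hcr _)⟩ := by
    intro x hx i hi
    have he : i = ⟨2 * (⟨x, hx⟩ : Fin nC).val + 1, by have := (⟨x, hx⟩ : Fin nC).isLt; omega⟩ :=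
      Fin.ext hi
    rw [he]
    exact hρ₂ ⟨x, hx⟩
  have hρval : ∀ i : Fin (2 * nC),
      Sum.elim Subtype.val Subtype.val (ρ i) = c ⟨i.val / 2, hhalf i⟩ := by
    intro i
    rcases Nat.even_or_odd i.val with ⟨x, hx⟩ | ⟨x, hx⟩
    · have hxlt : x < nC := by have := i.isLt; omega
      rw [hρeven x hxlt i (by omega)]
      show c ⟨x, hxlt⟩ = c ⟨i.val / 2, hhalf i⟩
      exact congrArg c (Fin.ext (by show x = i.val / 2; omega))
    · have hxlt : x < nC := by have := i.isLt; omega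
      rw [hρodd x hxlt i (by omega)]
      show c ⟨x, hxlt⟩ = c ⟨i.val / 2, hhalf i⟩
      exact congrArg c (Fin.ext (by show x = i.val / 2; omega))
  have hρinj : Function.Injective ρ := by
    intro i j hij
    have hv : c ⟨i.val / 2, hhalf i⟩ = c ⟨j.val / 2, hhalf j⟩ := by
      rw [← hρval i, ← hρval j, hij]
    have hdiv : i.val / 2 = j.val / 2 := congrArg Fin.val (hcinj hv)
    rcases Nat.even_or_odd i.val with ⟨x, hx⟩ | ⟨x, hx⟩ <;>
      rcases Nat.even_or_odd j.val with ⟨y, hy⟩ | ⟨y, hy⟩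
    · exact Fin.ext (by omega)
    · exfalso
      rw [hρeven x (by have := i.isLt; omega) i (by omega),
        hρodd y (by have := j.isLt; omega) j (by omega)] at hij
      exact Sum.inl_ne_inr hij
    · exfalso
      rw [hρodd x (by have := i.isLt; omega) i (by omega),
        hρeven y (by have := j.isLt; omega) j (by omega)] at hij
      exact Sum.inr_ne_inl hij
    · exact Fin.ext (by omega)
  -- the projection homomorphism
  have hfwd : ∀ p q : ↥Rs × (disjUnion (F.induce (C ∪ K₁)) (F.induce (C ∪ K₂))).V, indRel Rs (disjUnion (F.induce (C ∪ K₁)) (F.induce (C ∪ K₂))) ρ p q →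
      Sum.elim Subtype.val Subtype.val p.2 = Sum.elim Subtype.val Subtype.val q.2 := by
    rintro ⟨u, a⟩ ⟨u', a'⟩ ⟨i, j, hi, hj, huv⟩
    dsimp only at hi hj huv
    have h1i := (h1 u.1 u.2).2 i
    have h1j := (h1 u'.1 u'.2).2 j
    rw [huv] at h1i
    have hdiv : i.val / 2 = j.val / 2 := by rw [← h1i, ← h1j]
    show Sum.elim Subtype.val Subtype.val a = Sum.elim Subtype.val Subtype.val a'
    rw [hi, hj, hρval i, hρval j]
    exact congrArg c (Fin.ext hdiv)
  let f : (indicator Rs (disjUnion (F.induce (C ∪ K₁)) (F.induce (C ∪ K₂))) ρ).V → F.V :=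
    Quot.lift (fun p => Sum.elim Subtype.val Subtype.val p.2) hfwd
  have hfmk : ∀ (u : ↥Rs) (a : (disjUnion (F.induce (C ∪ K₁)) (F.induce (C ∪ K₂))).V),
      f (Quot.mk (indRel Rs (disjUnion (F.induce (C ∪ K₁)) (F.induce (C ∪ K₂))) ρ) (u, a)) = Sum.elim Subtype.val Subtype.val a :=
    fun _ _ => rfl
  have hfhom : IsHom (indicator Rs (disjUnion (F.induce (C ∪ K₁)) (F.induce (C ∪ K₂))) ρ) F f := by
    rintro i t ⟨u, t', ht', hk⟩
    have hft : ∀ k, (f ∘ t) k = Sum.elim Subtype.val Subtype.val (t' k) := by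
      intro k; show f (t k) = _; rw [hk k]
    rcases ht' with ⟨t₁, ht₁, rfl⟩ | ⟨t₂, ht₂, rfl⟩
    · have he : f ∘ t = fun k => (t₁ k).1 := funext fun k => hft k
      rw [he]; exact ht₁
    · have he : f ∘ t = fun k => (t₂ k).1 := funext fun k => hft k
      rw [he]; exact ht₂
  refine ⟨⟨f, hfmk, hfhom⟩, ?_⟩
  -- Part 2 : no homomorphism F → D
  intro g hg
  have hfg : IsHom F F (f ∘ g) := by
    intro i t ht
    exact hfhom i (g ∘ t) (hg i t ht)
  have hbij : Function.Bijective (f ∘ g) :=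
    ⟨Finite.injective_iff_surjective.mpr (hcore _ hfg), hcore _ hfg⟩
  let e : Equiv.Perm F.V := Equiv.ofBijective _ hbij
  have hiter : ∀ n, IsHom F F ((f ∘ g)^[n]) := by
    intro n; induction n with
    | zero => intro i t ht; simpa [Function.comp_def] using ht
    | succ n ih =>
      intro i t ht
      rw [Function.iterate_succ']
      exact hfg i _ (ih i t ht)
  set g' : F.V → (indicator Rs (disjUnion (F.induce (C ∪ K₁)) (F.induce (C ∪ K₂))) ρ).V := g ∘ (f ∘ g)^[orderOf e - 1] with hg'def
  have hg' : IsHom F (indicator Rs (disjUnion (F.induce (C ∪ K₁)) (F.induce (C ∪ K₂))) ρ) g' := by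
    intro i t ht
    exact hg i _ (hiter (orderOf e - 1) i t ht)
  have hfg' : ∀ a, f (g' a) = a := by
    intro a
    have hm : 0 < orderOf e := orderOf_pos e
    have h1' : f (g' a) = (f ∘ g)^[orderOf e] a := by
      show (f ∘ g) ((f ∘ g)^[orderOf e - 1] a) = _
      conv_rhs => rw [show orderOf e = (orderOf e - 1) + 1 by omega]
      rw [Function.iterate_succ_apply']
    rw [h1']
    have h2' : (f ∘ g)^[orderOf e] = ⇑(e ^ orderOf e) := (Equiv.Perm.coe_pow e (orderOf e)).symm
    rw [h2', pow_orderOf_eq_one]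
    rfl
  -- invariant classifying classes of the quotient
  let φ : ↥Rs × (disjUnion (F.induce (C ∪ K₁)) (F.induce (C ∪ K₂))).V → S ⊕ (↥Rs × (disjUnion (F.induce (C ∪ K₁)) (F.induce (C ∪ K₂))).V) := fun p =>
    if h : ∃ i, p.2 = ρ i then Sum.inl (p.1.1 h.choose) else Sum.inr p
  have hφroot : ∀ (u : ↥Rs) (i : Fin (2 * nC)), φ (u, ρ i) = Sum.inl (u.1 i) := by
    intro u i
    have hex : ∃ j, ρ i = ρ j := ⟨i, rfl⟩
    show (if h : ∃ j, ρ i = ρ j then Sum.inl (u.1 h.choose) else Sum.inr (u, ρ i))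
        = Sum.inl (u.1 i)
    rw [dif_pos hex]
    exact congrArg Sum.inl (congrArg u.1 (hρinj hex.choose_spec).symm)
  have hφnr : ∀ (u : ↥Rs) (a : (disjUnion (F.induce (C ∪ K₁)) (F.induce (C ∪ K₂))).V), (¬ ∃ i, a = ρ i) → φ (u, a) = Sum.inr (u, a) := by
    intro u a hna
    show (if h : ∃ j, a = ρ j then Sum.inl (u.1 h.choose) else Sum.inr (u, a)) = Sum.inr (u, a)
    rw [dif_neg hna]
  have hφinv : ∀ p q, indRel Rs (disjUnion (F.induce (C ∪ K₁)) (F.induce (C ∪ K₂))) ρ p q → φ p = φ q := by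
    rintro ⟨u, a⟩ ⟨u', a'⟩ ⟨i, j, hi, hj, huv⟩
    dsimp only at hi hj huv
    subst hi; subst hj
    rw [hφroot, hφroot]
    exact congrArg Sum.inl huv
  have hΦ : ∀ p q, Quot.mk (indRel Rs (disjUnion (F.induce (C ∪ K₁)) (F.induce (C ∪ K₂))) ρ) p = Quot.mk (indRel Rs (disjUnion (F.induce (C ∪ K₁)) (F.induce (C ∪ K₂))) ρ) q → φ p = φ q :=
    fun p q h => congrArg (Quot.lift φ hφinv) h
  have hmkroot : ∀ (u u' : ↥Rs) (i j : Fin (2 * nC)),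
      Quot.mk (indRel Rs (disjUnion (F.induce (C ∪ K₁)) (F.induce (C ∪ K₂))) ρ) (u, ρ i) = Quot.mk (indRel Rs (disjUnion (F.induce (C ∪ K₁)) (F.induce (C ∪ K₂))) ρ) (u', ρ j) →
      u.1 i = u'.1 j := by
    intro u u' i j h
    have hh := hΦ _ _ h
    rw [hφroot, hφroot] at hh
    exact Sum.inl.inj hh
  have hmknr : ∀ (u u' : ↥Rs) (a a' : (disjUnion (F.induce (C ∪ K₁)) (F.induce (C ∪ K₂))).V), (¬ ∃ i, a = ρ i) →
      Quot.mk (indRel Rs (disjUnion (F.induce (C ∪ K₁)) (F.induce (C ∪ K₂))) ρ) (u, a) = Quot.mk (indRel Rs (disjUnion (F.induce (C ∪ K₁)) (F.induce (C ∪ K₂))) ρ) (u', a') →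
      u = u' ∧ a = a' := by
    intro u u' a a' hnr h
    have hh := hΦ _ _ h
    rw [hφnr u a hnr] at hh
    by_cases hnr' : ∃ i, a' = ρ i
    · obtain ⟨i, rfl⟩ := hnr'
      rw [hφroot] at hh
      exact absurd hh (by simp)
    · rw [hφnr u' a' hnr'] at hh
      have hp := Sum.inr.inj hh
      exact ⟨congrArg Prod.fst hp, congrArg Prod.snd hp⟩
  have hnroot : ∀ (a : (disjUnion (F.induce (C ∪ K₁)) (F.induce (C ∪ K₂))).V), Sum.elim Subtype.val Subtype.val a ∉ C → ¬ ∃ i, a = ρ i := by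
    rintro a hv ⟨i, rfl⟩
    rw [hρval i] at hv
    exact hv (hcr _)
  -- representation of g' on the two components
  let PP₁ : F.V → ↥Rs → Prop := fun v u =>
    ∃ hv : v ∈ C ∪ K₁, g' v = Quot.mk (indRel Rs (disjUnion (F.induce (C ∪ K₁)) (F.induce (C ∪ K₂))) ρ) (u, Sum.inl ⟨v, hv⟩)
  let PP₂ : F.V → ↥Rs → Prop := fun v u =>
    ∃ hv : v ∈ C ∪ K₂, g' v = Quot.mk (indRel Rs (disjUnion (F.induce (C ∪ K₁)) (F.induce (C ∪ K₂))) ρ) (u, Sum.inr ⟨v, hv⟩)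
  have hrep₁ : ∀ v, v ∈ K₁ → ∃ u, PP₁ v u := by
    intro v hv
    obtain ⟨⟨u, a⟩, hq⟩ := Quot.exists_rep (g' v)
    have hval : Sum.elim Subtype.val Subtype.val a = v := by
      have hh := hfg' v
      rw [← hq] at hh
      exact hh
    cases a with
    | inl y =>
      have hy : y = ⟨v, Set.mem_union_right _ hv⟩ := Subtype.ext hval
      rw [hy] at hq
      exact ⟨u, Set.mem_union_right _ hv, hq.symm⟩
    | inr y =>
      exfalso
      have hy2 := y.2
      rw [show y.1 = v from hval] at hy2
      rcases hy2 with hC | hK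
      · exact hK₁sub v hv hC
      · exact hdisj v hv hK
  have hrep₂ : ∀ v, v ∈ K₂ → ∃ u, PP₂ v u := by
    intro v hv
    obtain ⟨⟨u, a⟩, hq⟩ := Quot.exists_rep (g' v)
    have hval : Sum.elim Subtype.val Subtype.val a = v := by
      have hh := hfg' v
      rw [← hq] at hh
      exact hh
    cases a with
    | inr y =>
      have hy : y = ⟨v, Set.mem_union_right _ hv⟩ := Subtype.ext hval
      rw [hy] at hq
      exact ⟨u, Set.mem_union_right _ hv, hq.symm⟩
    | inl y =>
      exfalso
      have hy2 := y.2
      rw [show y.1 = v from hval] at hy2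
      rcases hy2 with hC | hK
      · exact hK₂sub v hv hC
      · exact hdisj v hK hv
  have huniq₁ : ∀ v, v ∈ K₁ → ∀ u u', PP₁ v u → PP₁ v u' → u = u' := by
    rintro v hv u u' ⟨h₁, e₁⟩ ⟨h₂, e₂⟩
    have heq := e₁.symm.trans e₂
    have hnr : ¬ ∃ i, (Sum.inl ⟨v, h₁⟩ : (disjUnion (F.induce (C ∪ K₁)) (F.induce (C ∪ K₂))).V) = ρ i := hnroot _ (hK₁sub v hv)
    exact (hmknr _ _ _ _ hnr heq).1
  have huniq₂ : ∀ v, v ∈ K₂ → ∀ u u', PP₂ v u → PP₂ v u' → u = u' := by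
    rintro v hv u u' ⟨h₁, e₁⟩ ⟨h₂, e₂⟩
    have heq := e₁.symm.trans e₂
    have hnr : ¬ ∃ i, (Sum.inr ⟨v, h₁⟩ : (disjUnion (F.induce (C ∪ K₁)) (F.induce (C ∪ K₂))).V) = ρ i := hnroot _ (hK₂sub v hv)
    exact (hmknr _ _ _ _ hnr heq).1
  -- key tuple analysis
  have hE₁ : ∀ i (t : Fin (ar i) → F.V), t ∈ F.rel i → ∀ k₁, t k₁ ∈ K₁ →
      ∃ u : ↥Rs, (∀ kk, t kk ∈ K₁ → PP₁ (t kk) u) ∧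
        (∀ kk (x : Fin nC), t kk = c x →
          g' (c x) = Quot.mk (indRel Rs (disjUnion (F.induce (C ∪ K₁)) (F.induce (C ∪ K₂))) ρ)
            (u, ρ ⟨2 * x.val, by have := x.isLt; omega⟩)) := by
    intro i t ht k₁ hk₁
    obtain ⟨u, t', ht', hk⟩ := hg' i t ht
    have hvals : ∀ kk, Sum.elim Subtype.val Subtype.val (t' kk) = t kk := by
      intro kk
      have hh := hfg' (t kk)
      have hgk : g' (t kk) = Quot.mk (indRel Rs (disjUnion (F.induce (C ∪ K₁)) (F.induce (C ∪ K₂))) ρ) (u, t' kk) := hk kk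
      rw [hgk] at hh
      exact hh
    rcases ht' with ⟨t₁, ht₁, rfl⟩ | ⟨t₂, ht₂, rfl⟩
    · refine ⟨u, ?_, ?_⟩
      · intro kk h
        have hval := hvals kk
        refine ⟨Set.mem_union_right _ h, ?_⟩
        have hsub : (⟨t kk, Set.mem_union_right _ h⟩ : ↥(C ∪ K₁)) = t₁ kk :=
          Subtype.ext hval.symm
        exact (hk kk).trans
          (congrArg (fun z => Quot.mk (indRel Rs (disjUnion (F.induce (C ∪ K₁)) (F.induce (C ∪ K₂))) ρ) (u, Sum.inl z)) hsub.symm)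
      · intro kk x hkx
        have hval := hvals kk
        have h₁ : t₁ kk = ⟨c x, Set.mem_union_left _ (hcr x)⟩ :=
          Subtype.ext (hval.trans hkx)
        have h₂ : (Sum.inl (t₁ kk) : (disjUnion (F.induce (C ∪ K₁)) (F.induce (C ∪ K₂))).V) = ρ ⟨2 * x.val, by have := x.isLt; omega⟩ := by
          rw [h₁]; exact (hρ₁ x).symm
        have hgk : g' (t kk) = Quot.mk (indRel Rs (disjUnion (F.induce (C ∪ K₁)) (F.induce (C ∪ K₂))) ρ) (u, Sum.inl (t₁ kk)) := hk kk
        rw [hkx] at hgk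
        rw [hgk, h₂]
    · exfalso
      have hv := hvals k₁
      have h2' := (t₂ k₁).2
      rw [show (t₂ k₁).1 = t k₁ from hv] at h2'
      rcases h2' with hC | hK
      · exact hK₁sub _ hk₁ hC
      · exact hdisj _ hk₁ hK
  have hE₂ : ∀ i (t : Fin (ar i) → F.V), t ∈ F.rel i → ∀ k₁, t k₁ ∈ K₂ →
      ∃ u : ↥Rs, (∀ kk, t kk ∈ K₂ → PP₂ (t kk) u) ∧
        (∀ kk (x : Fin nC), t kk = c x →
          g' (c x) = Quot.mk (indRel Rs (disjUnion (F.induce (C ∪ K₁)) (F.induce (C ∪ K₂))) ρ)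
            (u, ρ ⟨2 * x.val + 1, by have := x.isLt; omega⟩)) := by
    intro i t ht k₁ hk₁
    obtain ⟨u, t', ht', hk⟩ := hg' i t ht
    have hvals : ∀ kk, Sum.elim Subtype.val Subtype.val (t' kk) = t kk := by
      intro kk
      have hh := hfg' (t kk)
      have hgk : g' (t kk) = Quot.mk (indRel Rs (disjUnion (F.induce (C ∪ K₁)) (F.induce (C ∪ K₂))) ρ) (u, t' kk) := hk kk
      rw [hgk] at hh
      exact hh
    rcases ht' with ⟨t₁, ht₁, rfl⟩ | ⟨t₂, ht₂, rfl⟩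
    · exfalso
      have hv := hvals k₁
      have h2' := (t₁ k₁).2
      rw [show (t₁ k₁).1 = t k₁ from hv] at h2'
      rcases h2' with hC | hK
      · exact hK₂sub _ hk₁ hC
      · exact hdisj _ hK hk₁
    · refine ⟨u, ?_, ?_⟩
      · intro kk h
        have hval := hvals kk
        refine ⟨Set.mem_union_right _ h, ?_⟩
        have hsub : (⟨t kk, Set.mem_union_right _ h⟩ : ↥(C ∪ K₂)) = t₂ kk :=
          Subtype.ext hval.symm
        exact (hk kk).trans
          (congrArg (fun z => Quot.mk (indRel Rs (disjUnion (F.induce (C ∪ K₁)) (F.induce (C ∪ K₂))) ρ) (u, Sum.inr z)) hsub.symm)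
      · intro kk x hkx
        have hval := hvals kk
        have h₁ : t₂ kk = ⟨c x, Set.mem_union_left _ (hcr x)⟩ :=
          Subtype.ext (hval.trans hkx)
        have h₂ : (Sum.inr (t₂ kk) : (disjUnion (F.induce (C ∪ K₁)) (F.induce (C ∪ K₂))).V) = ρ ⟨2 * x.val + 1, by have := x.isLt; omega⟩ := by
          rw [h₁]; exact (hρ₂ x).symm
        have hgk : g' (t kk) = Quot.mk (indRel Rs (disjUnion (F.induce (C ∪ K₁)) (F.induce (C ∪ K₂))) ρ) (u, Sum.inr (t₂ kk)) := hk kk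
        rw [hkx] at hgk
        rw [hgk, h₂]
  -- the copy is constant along each component
  obtain ⟨u₁, hu₁⟩ := hrep₁ _ hv₁K₁
  obtain ⟨u₂, hu₂⟩ := hrep₂ _ hv₂K₂
  have hconst₁ : ∀ v, v ∈ K₁ → PP₁ v u₁ := by
    have hstep : ∀ a b : (F.induce Cᶜ).V, (F.induce Cᶜ).gaifman.Adj a b →
        a.1 ∈ K₁ ∧ PP₁ a.1 u₁ → b.1 ∈ K₁ ∧ PP₁ b.1 u₁ := by
      rintro a b ⟨hab, i, t, ht, ⟨ka, hka⟩, ⟨kb, hkb⟩⟩ ⟨haK, haP⟩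
      have hbK : b.1 ∈ K₁ := by
        have haK' := haK
        rw [hK₁def] at haK'
        obtain ⟨z, hz, hza⟩ := haK'
        have hzz : z = a := Subtype.ext hza
        subst hzz
        rw [hK₁def]
        exact ⟨b, hz.trans (SimpleGraph.Adj.reachable ⟨hab, i, t, ht, ⟨ka, hka⟩, ⟨kb, hkb⟩⟩),
          rfl⟩
      have htF : (fun kk => (t kk).1) ∈ F.rel i := ht
      have hkaK : (t ka).1 ∈ K₁ := by rw [hka]; exact haK
      obtain ⟨u, hu, -⟩ := hE₁ i _ htF ka hkaK
      have hPa : PP₁ (t ka).1 u := hu ka hkaK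
      rw [hka] at hPa
      have huu : u = u₁ := huniq₁ _ haK u u₁ hPa haP
      have hPb : PP₁ (t kb).1 u := by
        apply hu kb
        rw [hkb]; exact hbK
      rw [hkb, huu] at hPb
      exact ⟨hbK, hPb⟩
    intro v hv
    have hv' := hv
    rw [hK₁def] at hv'
    obtain ⟨z, hz, rfl⟩ := hv'
    exact (aux_reach_closed
      (M := {z : (F.induce Cᶜ).V | z.1 ∈ K₁ ∧ PP₁ z.1 u₁})
      (fun a b hab h => hstep a b hab h) hz ⟨hv₁K₁, hu₁⟩).2
  have hconst₂ : ∀ v, v ∈ K₂ → PP₂ v u₂ := by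
    have hstep : ∀ a b : (F.induce Cᶜ).V, (F.induce Cᶜ).gaifman.Adj a b →
        a.1 ∈ K₂ ∧ PP₂ a.1 u₂ → b.1 ∈ K₂ ∧ PP₂ b.1 u₂ := by
      rintro a b ⟨hab, i, t, ht, ⟨ka, hka⟩, ⟨kb, hkb⟩⟩ ⟨haK, haP⟩
      have hbK : b.1 ∈ K₂ := by
        have haK' := haK
        rw [hK₂def] at haK'
        obtain ⟨z, hz, hza⟩ := haK'
        have hzz : z = a := Subtype.ext hza
        subst hzz
        rw [hK₂def]
        exact ⟨b, hz.trans (SimpleGraph.Adj.reachable ⟨hab, i, t, ht, ⟨ka, hka⟩, ⟨kb, hkb⟩⟩),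
          rfl⟩
      have htF : (fun kk => (t kk).1) ∈ F.rel i := ht
      have hkaK : (t ka).1 ∈ K₂ := by rw [hka]; exact haK
      obtain ⟨u, hu, -⟩ := hE₂ i _ htF ka hkaK
      have hPa : PP₂ (t ka).1 u := hu ka hkaK
      rw [hka] at hPa
      have huu : u = u₂ := huniq₂ _ haK u u₂ hPa haP
      have hPb : PP₂ (t kb).1 u := by
        apply hu kb
        rw [hkb]; exact hbK
      rw [hkb, huu] at hPb
      exact ⟨hbK, hPb⟩
    intro v hv
    have hv' := hv
    rw [hK₂def] at hv'
    obtain ⟨z, hz, rfl⟩ := hv'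
    exact (aux_reach_closed
      (M := {z : (F.induce Cᶜ).V | z.1 ∈ K₂ ∧ PP₂ z.1 u₂})
      (fun a b hab h => hstep a b hab h) hz ⟨hv₂K₂, hu₂⟩).2
  -- minimality: every cut vertex lies in a tuple meeting each component
  have hFK₁ : ∀ x : Fin nC, ∃ i t, t ∈ F.rel i ∧ (∃ kk, t kk = c x) ∧ (∃ kk, t kk ∈ K₁) := by
    intro x
    by_contra hno
    push_neg at hno
    refine hmin₁.2 (C \ {c x}) (Set.sdiff_singleton_ssubset.mpr (hcr x)) ?_
    intro hpre
    have hsub : Cᶜ ⊆ (C \ {c x})ᶜ := Set.compl_subset_compl.mpr Set.diff_subset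
    have hstep : ∀ a b : (F.induce (C \ {c x})ᶜ).V,
        (F.induce (C \ {c x})ᶜ).gaifman.Adj a b → a.1 ∈ K₁ → b.1 ∈ K₁ := by
      rintro a b ⟨hab, i, t, ht, ⟨ka, hka⟩, ⟨kb, hkb⟩⟩ haK
      have htF : (fun kk => (t kk).1) ∈ F.rel i := ht
      have hnc : ∀ kk, (t kk).1 ≠ c x := by
        intro kk hk
        exact hno i _ htF ⟨kk, hk⟩ ka (by rw [hka]; exact haK)
      have hmem : ∀ kk, (t kk).1 ∈ Cᶜ := by
        intro kk hC
        exact (t kk).2 ⟨hC, hnc kk⟩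
      set t₀ : Fin (ar i) → (F.induce Cᶜ).V := fun kk => ⟨(t kk).1, hmem kk⟩
        with ht₀def
    -- a and b as vertices of F.induce Cᶜ
      have haC : a.1 ∈ Cᶜ := by rw [← hka]; exact hmem ka
      have hbC : b.1 ∈ Cᶜ := by rw [← hkb]; exact hmem kb
      have hadj : (F.induce Cᶜ).gaifman.Adj ⟨a.1, haC⟩ ⟨b.1, hbC⟩ := by
        refine ⟨?_, i, t₀, ht, ⟨ka, ?_⟩, ⟨kb, ?_⟩⟩
        · intro hcon
          exact hab (Subtype.ext (Subtype.mk_eq_mk.mp hcon))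
        · exact Subtype.ext (show (t ka).1 = a.1 from congrArg Subtype.val hka)
        · exact Subtype.ext (show (t kb).1 = b.1 from congrArg Subtype.val hkb)
      have haK' := haK
      rw [hK₁def] at haK'
      obtain ⟨z, hz, hza⟩ := haK'
      have hzz : z = ⟨a.1, haC⟩ := Subtype.ext hza
      subst hzz
      rw [hK₁def]
      exact ⟨⟨b.1, hbC⟩, hz.trans (SimpleGraph.Adj.reachable hadj), rfl⟩
    have hreach := hpre ⟨v₁'.1, hsub v₁'.2⟩ ⟨v₂'.1, hsub v₂'.2⟩
    have hv2K1 : v₂'.1 ∈ K₁ :=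
      aux_reach_closed (M := {z : (F.induce (C \ {c x})ᶜ).V | z.1 ∈ K₁})
        (fun a b hab h => hstep a b hab h) hreach hv₁K₁
    exact hdisj _ hv2K1 hv₂K₂
  have hFK₂ : ∀ x : Fin nC, ∃ i t, t ∈ F.rel i ∧ (∃ kk, t kk = c x) ∧ (∃ kk, t kk ∈ K₂) := by
    intro x
    by_contra hno
    push_neg at hno
    refine hmin₁.2 (C \ {c x}) (Set.sdiff_singleton_ssubset.mpr (hcr x)) ?_
    intro hpre
    have hsub : Cᶜ ⊆ (C \ {c x})ᶜ := Set.compl_subset_compl.mpr Set.diff_subset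
    have hstep : ∀ a b : (F.induce (C \ {c x})ᶜ).V,
        (F.induce (C \ {c x})ᶜ).gaifman.Adj a b → a.1 ∈ K₂ → b.1 ∈ K₂ := by
      rintro a b ⟨hab, i, t, ht, ⟨ka, hka⟩, ⟨kb, hkb⟩⟩ haK
      have htF : (fun kk => (t kk).1) ∈ F.rel i := ht
      have hnc : ∀ kk, (t kk).1 ≠ c x := by
        intro kk hk
        exact hno i _ htF ⟨kk, hk⟩ ka (by rw [hka]; exact haK)
      have hmem : ∀ kk, (t kk).1 ∈ Cᶜ := by
        intro kk hC
        exact (t kk).2 ⟨hC, hnc kk⟩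
      set t₀ : Fin (ar i) → (F.induce Cᶜ).V := fun kk => ⟨(t kk).1, hmem kk⟩
        with ht₀def
      have haC : a.1 ∈ Cᶜ := by rw [← hka]; exact hmem ka
      have hbC : b.1 ∈ Cᶜ := by rw [← hkb]; exact hmem kb
      have hadj : (F.induce Cᶜ).gaifman.Adj ⟨a.1, haC⟩ ⟨b.1, hbC⟩ := by
        refine ⟨?_, i, t₀, ht, ⟨ka, ?_⟩, ⟨kb, ?_⟩⟩
        · intro hcon
          exact hab (Subtype.ext (Subtype.mk_eq_mk.mp hcon))
        · exact Subtype.ext (show (t ka).1 = a.1 from congrArg Subtype.val hka)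
        · exact Subtype.ext (show (t kb).1 = b.1 from congrArg Subtype.val hkb)
      have haK' := haK
      rw [hK₂def] at haK'
      obtain ⟨z, hz, hza⟩ := haK'
      have hzz : z = ⟨a.1, haC⟩ := Subtype.ext hza
      subst hzz
      rw [hK₂def]
      exact ⟨⟨b.1, hbC⟩, hz.trans (SimpleGraph.Adj.reachable hadj), rfl⟩
    have hreach := hpre ⟨v₂'.1, hsub v₂'.2⟩ ⟨v₁'.1, hsub v₁'.2⟩
    have hv1K2 : v₁'.1 ∈ K₂ :=
      aux_reach_closed (M := {z : (F.induce (C \ {c x})ᶜ).V | z.1 ∈ K₂})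
        (fun a b hab h => hstep a b hab h) hreach hv₂K₂
    exact hdisj _ hv₁K₁ hv1K2
  -- the two copies agree on the interleaved roots
  have hA₁ : ∀ x : Fin nC, g' (c x) = Quot.mk (indRel Rs (disjUnion (F.induce (C ∪ K₁)) (F.induce (C ∪ K₂))) ρ)
      (u₁, ρ ⟨2 * x.val, by have := x.isLt; omega⟩) := by
    intro x
    obtain ⟨i, t, ht, ⟨k₀, hk₀⟩, ⟨kk, hkk⟩⟩ := hFK₁ x
    obtain ⟨u, hu, hroot⟩ := hE₁ i t ht kk hkk
    have huu : u = u₁ := huniq₁ (t kk) hkk u u₁ (hu kk hkk) (hconst₁ _ hkk)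
    rw [← huu]
    exact hroot k₀ x hk₀
  have hA₂ : ∀ x : Fin nC, g' (c x) = Quot.mk (indRel Rs (disjUnion (F.induce (C ∪ K₁)) (F.induce (C ∪ K₂))) ρ)
      (u₂, ρ ⟨2 * x.val + 1, by have := x.isLt; omega⟩) := by
    intro x
    obtain ⟨i, t, ht, ⟨k₀, hk₀⟩, ⟨kk, hkk⟩⟩ := hFK₂ x
    obtain ⟨u, hu, hroot⟩ := hE₂ i t ht kk hkk
    have huu : u = u₂ := huniq₂ (t kk) hkk u u₂ (hu kk hkk) (hconst₂ _ hkk)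
    rw [← huu]
    exact hroot k₀ x hk₀
  have hroots : ∀ x : Fin nC,
      u₁.1 ⟨2 * x.val, by have := x.isLt; omega⟩ =
      u₂.1 ⟨2 * x.val + 1, by have := x.isLt; omega⟩ := by
    intro x
    exact hmkroot u₁ u₂ _ _ ((hA₁ x).symm.trans (hA₂ x))
  have hinj₁ := (h1 u₁.1 u₁.2).1
  have hne' : u₁.1 ≠ u₂.1 := by
    intro hEq
    have h0 := hroots ⟨0, by omega⟩
    rw [← hEq] at h0
    have := hinj₁ h0
    have hvv := congrArg Fin.val this
    simp only [Fin.val] at hvv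
    omega
  have hss := h2 u₁.1 u₁.2 u₂.1 u₂.2 hne'
  have e0 := hroots ⟨0, by omega⟩
  have e1 := hroots ⟨1, by omega⟩
  have m0 : u₁.1 ⟨2 * ((⟨0, by omega⟩ : Fin nC)).val, by omega⟩
      ∈ Set.range u₁.1 ∩ Set.range u₂.1 := ⟨⟨_, rfl⟩, ⟨_, e0.symm⟩⟩
  have m1 : u₁.1 ⟨2 * ((⟨1, by omega⟩ : Fin nC)).val, by omega⟩
      ∈ Set.range u₁.1 ∩ Set.range u₂.1 := ⟨⟨_, rfl⟩, ⟨_, e1.symm⟩⟩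
  have hcc := hinj₁ (hss m0 m1)
  have hvv := congrArg Fin.val hcc
  simp only [Fin.val] at hvv
  omega
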